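/- Assume B is invertible and θ ≠ 0. (i) If (θ, s, w) satisfies the harmonic pencil equations, then (B Bᵀ + β² e_m e_mᵀ) s = θ² s and B w = θ s. (ii) Conversely, if (B Bᵀ + β² e_m e_mᵀ) s = θ² s and w = θ B⁻¹ s, then (θ, s, w) satisfies the harmonic pencil equations. -/

import Mathlib

open Matrix

noncomputable def enorm' {ι : Type*} [Fintype ι] (v : ι → ℝ) : ℝ :=
  Real.sqrt (∑ i, v i ^ 2)

def eLast (m : ℕ) : Fin m → ℝ := fun i => if (i : ℕ) = m - 1 then 1 else 0

def HarmonicPencil {m : ℕ} (B : Matrix (Fin m) (Fin m) ℝ) (β θ : ℝ)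
    (s w : Fin m → ℝ) : Prop :=
  θ • B.mulVec w = (B * Bᵀ + β ^ 2 • vecMulVec (eLast m) (eLast m)).mulVec s ∧
  θ • Bᵀ.mulVec s = (Bᵀ * B).mulVec w

noncomputable def specNorm {m n : Type*} [Fintype m] [Fintype n] [DecidableEq n]
    (A : Matrix m n ℝ) : ℝ :=
  ‖LinearMap.toContinuousLinearMap (Matrix.toEuclideanLin A)‖

noncomputable def sep {n : Type*} [Fintype n] [DecidableEq n] (a : ℝ) (G : Matrix n n ℝ) : ℝ :=
  sInf {r | ∃ x : n → ℝ, enorm' x = 1 ∧ r = enorm' ((a • (1 : Matrix n n ℝ) - G).mulVec x)}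

noncomputable def sigmaMin {m n : Type*} [Fintype m] [Fintype n] (C : Matrix m n ℝ) : ℝ :=
  sSup {c | 0 ≤ c ∧ ∀ h, c * enorm' h ≤ enorm' (C.mulVec h)}

noncomputable def sinAngleVec {ι : Type*} [Fintype ι] (x y : ι → ℝ) : ℝ :=
  Real.sqrt (1 - (x ⬝ᵥ y) ^ 2 / (enorm' x ^ 2 * enorm' y ^ 2))

noncomputable def toE {ι : Type*} (v : ι → ℝ) : EuclideanSpace ℝ ι :=
  (WithLp.equiv 2 (ι → ℝ)).symm v

noncomputable def ofE {ι : Type*} (v : EuclideanSpace ℝ ι) : ι → ℝ :=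
  WithLp.equiv 2 (ι → ℝ) v

noncomputable def sinAngleSub {ι : Type*} [Fintype ι] (x : EuclideanSpace ℝ ι)
    (E : Submodule ℝ (EuclideanSpace ℝ ι)) : ℝ :=
  ‖x - (E.orthogonalProjectionOnto x : EuclideanSpace ℝ ι)‖ / ‖x‖

def Atilde {M N : ℕ} (A : Matrix (Fin M) (Fin N) ℝ) :
    Matrix (Fin M ⊕ Fin N) (Fin M ⊕ Fin N) ℝ :=
  fromBlocks 0 A Aᵀ 0

def Btilde {m : ℕ} (B : Matrix (Fin m) (Fin m) ℝ) :
    Matrix (Fin m ⊕ Fin m) (Fin m ⊕ Fin m) ℝ :=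
  fromBlocks 0 B Bᵀ 0

noncomputable def Ctilde {m : ℕ} (B : Matrix (Fin m) (Fin m) ℝ) (β : ℝ) :
    Matrix (Fin m ⊕ Fin m) (Fin m ⊕ Fin m) ℝ :=
  fromBlocks (B * Bᵀ + β ^ 2 • vecMulVec (eLast m) (eLast m)) 0 0 (Bᵀ * B)

noncomputable def colSpanE {M N m : ℕ} (P : Matrix (Fin M) (Fin m) ℝ)
    (Q : Matrix (Fin N) (Fin m) ℝ) : Submodule ℝ (EuclideanSpace ℝ (Fin M ⊕ Fin N)) :=
  Submodule.span ℝ {z | ∃ x y : Fin m → ℝ, z = toE (Sum.elim (P.mulVec x) (Q.mulVec y))}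

noncomputable def Mrho {m : ℕ} (B : Matrix (Fin m) (Fin m) ℝ) (β ρ : ℝ) :
    Matrix ((Fin m ⊕ Fin m) ⊕ Unit) (Fin m ⊕ Fin m) ℝ :=
  Matrix.fromRows
    (fromBlocks (-(ρ • (1 : Matrix (Fin m) (Fin m) ℝ))) B Bᵀ (-(ρ • 1)))
    (Matrix.of fun (_ : Unit) j => Sum.elim (β • eLast m) (0 : Fin m → ℝ) j)

theorem Matrix.smul_mulVec_pencil_iff {R n : Type*} [CommRing R] [Fintype n] [DecidableEq n]
    {B : Matrix n n R} (hB : IsUnit B) (C : Matrix n n R) (θ : R) (s w : n → R) :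
    (θ • B *ᵥ w = C *ᵥ s ∧ θ • Bᵀ *ᵥ s = (Bᵀ * B) *ᵥ w) ↔
      (C *ᵥ s = θ ^ 2 • s ∧ B *ᵥ w = θ • s) := by
  have hBw : θ • Bᵀ *ᵥ s = (Bᵀ * B) *ᵥ w ↔ B *ᵥ w = θ • s := by
    rw [← mulVec_mulVec, ← mulVec_smul, eq_comm]
    exact (mulVec_injective_of_isUnit ((isUnit_transpose B).2 hB)).eq_iff
  rw [hBw]
  constructor
  · rintro ⟨hC, hw⟩
    rw [← hC, hw, smul_smul, sq]
    exact ⟨rfl, rfl⟩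
  · rintro ⟨hC, hw⟩
    rw [hC, hw, smul_smul, sq]
    exact ⟨rfl, rfl⟩

theorem Matrix.mulVec_smul_inv_mulVec {R n : Type*} [CommRing R] [Fintype n] [DecidableEq n]
    {B : Matrix n n R} (hB : IsUnit B) (θ : R) (s : n → R) :
    B *ᵥ (θ • B⁻¹ *ᵥ s) = θ • s := by
  rw [mulVec_smul, mulVec_mulVec, mul_nonsing_inv B ((isUnit_iff_isUnit_det B).mp hB),
    one_mulVec]

theorem harmonicPencil_iff {m : ℕ} {B : Matrix (Fin m) (Fin m) ℝ} (hB : IsUnit B)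
    (β θ : ℝ) (s w : Fin m → ℝ) :
    HarmonicPencil B β θ s w ↔
      (B * Bᵀ + β ^ 2 • vecMulVec (eLast m) (eLast m)) *ᵥ s = θ ^ 2 • s ∧ B *ᵥ w = θ • s :=
  smul_mulVec_pencil_iff hB _ θ s w

theorem stmt4_general (m : ℕ) (B : Matrix (Fin m) (Fin m) ℝ) (hB : IsUnit B)
    (β θ : ℝ) :
    (∀ s w : Fin m → ℝ, HarmonicPencil B β θ s w →
      (B * Bᵀ + β ^ 2 • vecMulVec (eLast m) (eLast m)).mulVec s = θ ^ 2 • s ∧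
      B.mulVec w = θ • s) ∧
    (∀ s : Fin m → ℝ,
      (B * Bᵀ + β ^ 2 • vecMulVec (eLast m) (eLast m)).mulVec s = θ ^ 2 • s →
      HarmonicPencil B β θ s (θ • B⁻¹.mulVec s)) :=
  ⟨fun s w => (harmonicPencil_iff hB β θ s w).mp,
    fun s hs => (harmonicPencil_iff hB β θ s _).mpr ⟨hs, mulVec_smul_inv_mulVec hB θ s⟩⟩

theorem stmt4 (m : ℕ) (hm : 0 < m) (B : Matrix (Fin m) (Fin m) ℝ) (hB : IsUnit B)
    (β θ : ℝ) (hθ : θ ≠ 0) :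
    (∀ s w : Fin m → ℝ, HarmonicPencil B β θ s w →
      (B * Bᵀ + β ^ 2 • vecMulVec (eLast m) (eLast m)).mulVec s = θ ^ 2 • s ∧
      B.mulVec w = θ • s) ∧
    (∀ s : Fin m → ℝ,
      (B * Bᵀ + β ^ 2 • vecMulVec (eLast m) (eLast m)).mulVec s = θ ^ 2 • s →
      HarmonicPencil B β θ s (θ • B⁻¹.mulVec s)) :=
  stmt4_general m B hB β θ
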